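/- Let n ≥ 2, k ≥ 1 an integer, M ≥ 3, and −M + k/2 ≤ j ≤ kγ − 2 for some γ ∈ [1/2,1). Let ω, ν ∈ Sⁿ⁻¹ with |ν − ω| > 2^{3+M+j−k}, and let ζ, η ∈ ℝⁿ satisfy: |ζ| ≤ 2^j; 2^{k−2} ≤ |η| ≤ 2^k; η ≠ 0 and |η/|η| − ν| ≤ 2^{1−k/2}; and 2^{k−3} ≤ |ζ+η| ≤ 2^{k+1}. Then |(ζ+η)/|ζ+η| − ω| > |ζ+η|^{−1/2}. -/
import Mathlib

lemma norm_normalize_sub_normalize {E : Type*} [NormedAddCommGroup E] [NormedSpace ℝ E]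
    (x y : E) (hx : x ≠ 0) :
    ‖(‖x‖⁻¹ • x) - (‖y‖⁻¹ • y)‖ ≤ 2 * ‖x - y‖ / ‖x‖ := by
  have hxp : 0 < ‖x‖ := norm_pos_iff.mpr hx
  have hdecomp : ‖x‖⁻¹ • x - ‖y‖⁻¹ • y
      = ‖x‖⁻¹ • (x - y) + (‖x‖⁻¹ - ‖y‖⁻¹) • y := by
    rw [smul_sub, sub_smul]; abel
  have h2 : |‖x‖⁻¹ - ‖y‖⁻¹| * ‖y‖ ≤ ‖x - y‖ / ‖x‖ := by
    rcases eq_or_ne y 0 with h | h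
    · simp [h]; positivity
    · have hyp : 0 < ‖y‖ := norm_pos_iff.mpr h
      have : ‖x‖⁻¹ - ‖y‖⁻¹ = (‖y‖ - ‖x‖) / (‖x‖ * ‖y‖) := by field_simp
      rw [this, abs_div, abs_of_pos (by positivity : (0:ℝ) < ‖x‖ * ‖y‖)]
      have : |‖y‖ - ‖x‖| / (‖x‖ * ‖y‖) * ‖y‖ = |‖y‖ - ‖x‖| / ‖x‖ := by
        field_simp
      rw [this]
      gcongr
      rw [abs_sub_comm]
      exact abs_norm_sub_norm_le x y
  calc ‖(‖x‖⁻¹ • x) - (‖y‖⁻¹ • y)‖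
      ≤ ‖‖x‖⁻¹ • (x - y)‖ + ‖(‖x‖⁻¹ - ‖y‖⁻¹) • y‖ := by rw [hdecomp]; exact norm_add_le _ _
    _ = ‖x‖⁻¹ * ‖x - y‖ + |‖x‖⁻¹ - ‖y‖⁻¹| * ‖y‖ := by
        rw [norm_smul, norm_smul, Real.norm_eq_abs, Real.norm_eq_abs,
          abs_of_pos (inv_pos.mpr hxp)]
    _ ≤ ‖x - y‖ / ‖x‖ + ‖x - y‖ / ‖x‖ := by
        have : ‖x‖⁻¹ * ‖x - y‖ = ‖x - y‖ / ‖x‖ := by rw [inv_mul_eq_div]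
        rw [this]; linarith
    _ = 2 * ‖x - y‖ / ‖x‖ := by ring

/-- the geometric separation step: under the stated conditions on
`k, j, M, γ, ω, ν, ζ, η`, one has `|(ζ+η)/|ζ+η| − ω| > |ζ+η|^{−1/2}`. -/
theorem stmt16 (n : ℕ) (hn : 2 ≤ n) (k : ℕ) (hk : 1 ≤ k) (M γ : ℝ) (hM : 3 ≤ M)
    (hγ : γ ∈ Set.Ico (1/2 : ℝ) 1) (j : ℤ)
    (hj1 : -M + (k:ℝ)/2 ≤ (j:ℝ)) (hj2 : (j:ℝ) ≤ (k:ℝ) * γ - 2)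
    (ω ν : EuclideanSpace ℝ (Fin n)) (hω : ‖ω‖ = 1) (hν : ‖ν‖ = 1)
    (hsep : (2:ℝ) ^ (3 + M + (j:ℝ) - (k:ℝ)) < ‖ν - ω‖)
    (ζ η : EuclideanSpace ℝ (Fin n))
    (hζ : ‖ζ‖ ≤ (2:ℝ) ^ (j:ℝ))
    (hη1 : (2:ℝ) ^ ((k:ℝ) - 2) ≤ ‖η‖) (hη2 : ‖η‖ ≤ (2:ℝ) ^ (k:ℝ)) (hη0 : η ≠ 0)
    (hν' : ‖(‖η‖⁻¹ • η) - ν‖ ≤ (2:ℝ) ^ (1 - (k:ℝ)/2))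
    (hsum1 : (2:ℝ) ^ ((k:ℝ) - 3) ≤ ‖ζ + η‖) (hsum2 : ‖ζ + η‖ ≤ (2:ℝ) ^ ((k:ℝ) + 1)) :
    ‖ζ + η‖ ^ (-(1:ℝ)/2) < ‖(‖ζ + η‖⁻¹ • (ζ + η)) - ω‖ := by
  have two_pos : (0:ℝ) < 2 := by norm_num
  have hsum_pos : (0:ℝ) < ‖ζ + η‖ :=
    lt_of_lt_of_le (Real.rpow_pos_of_pos two_pos _) hsum1
  have hsum0 : ζ + η ≠ 0 := by
    intro h; rw [h, norm_zero] at hsum_pos; exact lt_irrefl 0 hsum_pos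
  set u := ‖ζ + η‖⁻¹ • (ζ + η)
  set v := ‖η‖⁻¹ • η
  -- step 1: ‖u - v‖ ≤ 2^{4+j-k}
  have h1 : ‖u - v‖ ≤ (2:ℝ) ^ (4 + (j:ℝ) - (k:ℝ)) := by
    have := norm_normalize_sub_normalize (ζ + η) η hsum0
    have hζη : ‖(ζ + η) - η‖ = ‖ζ‖ := by rw [add_sub_cancel_right]
    rw [hζη] at this
    refine this.trans ?_
    have hnum : 2 * ‖ζ‖ ≤ 2 * (2:ℝ) ^ (j:ℝ) := by linarith
    have : 2 * ‖ζ‖ / ‖ζ + η‖ ≤ 2 * (2:ℝ) ^ (j:ℝ) / (2:ℝ) ^ ((k:ℝ) - 3) :=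
      div_le_div₀ (by positivity) hnum (Real.rpow_pos_of_pos two_pos _) hsum1
    refine this.trans (le_of_eq ?_)
    have ea : (2:ℝ) ^ (1 + (j:ℝ)) = 2 * 2 ^ (j:ℝ) := by
      rw [Real.rpow_add two_pos, Real.rpow_one]
    have eb : (2:ℝ) ^ (4 + (j:ℝ) - (k:ℝ)) = 2 ^ (1 + (j:ℝ)) / 2 ^ ((k:ℝ) - 3) := by
      rw [← Real.rpow_sub two_pos]; congr 1; ring
    rw [eb, ea]
  -- step 2: ‖u - ν‖ ≤ 2^{2+M+j-k}
  have h2 : ‖u - ν‖ ≤ (2:ℝ) ^ (2 + M + (j:ℝ) - (k:ℝ)) := by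
    have htri : ‖u - ν‖ ≤ ‖u - v‖ + ‖v - ν‖ := norm_sub_le_norm_sub_add_norm_sub u v ν
    have e1 : (2:ℝ) ^ (4 + (j:ℝ) - (k:ℝ)) ≤ (2:ℝ) ^ (1 + M + (j:ℝ) - (k:ℝ)) :=
      Real.rpow_le_rpow_of_exponent_le one_le_two (by linarith)
    have e2 : (2:ℝ) ^ (1 - (k:ℝ)/2) ≤ (2:ℝ) ^ (1 + M + (j:ℝ) - (k:ℝ)) :=
      Real.rpow_le_rpow_of_exponent_le one_le_two (by linarith)
    have esum : (2:ℝ) ^ (1 + M + (j:ℝ) - (k:ℝ)) + (2:ℝ) ^ (1 + M + (j:ℝ) - (k:ℝ))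
        = (2:ℝ) ^ (2 + M + (j:ℝ) - (k:ℝ)) := by
      rw [show (2 + M + (j:ℝ) - (k:ℝ)) = 1 + (1 + M + (j:ℝ) - (k:ℝ)) by ring,
        Real.rpow_add two_pos, Real.rpow_one]
      ring
    calc ‖u - ν‖ ≤ ‖u - v‖ + ‖v - ν‖ := htri
      _ ≤ (2:ℝ) ^ (4 + (j:ℝ) - (k:ℝ)) + (2:ℝ) ^ (1 - (k:ℝ)/2) := add_le_add h1 hν'
      _ ≤ (2:ℝ) ^ (1 + M + (j:ℝ) - (k:ℝ)) + (2:ℝ) ^ (1 + M + (j:ℝ) - (k:ℝ)) :=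
          add_le_add e1 e2
      _ = (2:ℝ) ^ (2 + M + (j:ℝ) - (k:ℝ)) := esum
  -- step 3: lower bound on ‖u - ω‖
  have h3 : (2:ℝ) ^ (2 + M + (j:ℝ) - (k:ℝ)) < ‖u - ω‖ := by
    have htri : ‖ν - ω‖ ≤ ‖ν - u‖ + ‖u - ω‖ := norm_sub_le_norm_sub_add_norm_sub ν u ω
    rw [norm_sub_rev ν u] at htri
    have ediff : (2:ℝ) ^ (3 + M + (j:ℝ) - (k:ℝ))
        = (2:ℝ) ^ (2 + M + (j:ℝ) - (k:ℝ)) + (2:ℝ) ^ (2 + M + (j:ℝ) - (k:ℝ)) := by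
      rw [show (3 + M + (j:ℝ) - (k:ℝ)) = 1 + (2 + M + (j:ℝ) - (k:ℝ)) by ring,
        Real.rpow_add two_pos, Real.rpow_one]
      ring
    nlinarith [hsep, h2, htri]
  -- step 4: ‖ζ+η‖^{-1/2} ≤ 2^{2+M+j-k}
  have h4 : ‖ζ + η‖ ^ (-(1:ℝ)/2) ≤ (2:ℝ) ^ (2 + M + (j:ℝ) - (k:ℝ)) := by
    have hb : ‖ζ + η‖ ^ (-(1:ℝ)/2) ≤ ((2:ℝ) ^ ((k:ℝ) - 3)) ^ (-(1:ℝ)/2) := by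
      apply Real.rpow_le_rpow_of_nonpos (Real.rpow_pos_of_pos two_pos _) hsum1
      norm_num
    refine hb.trans ?_
    rw [← Real.rpow_mul (by norm_num : (0:ℝ) ≤ 2)]
    exact Real.rpow_le_rpow_of_exponent_le one_le_two (by linarith)
  exact lt_of_le_of_lt h4 h3
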